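/- arXiv:math/9812131 — 2 statements merged into one kernel-verified Lean document; each statement's English description precedes it below -/
import Mathlib

section
/- For all real numbers m₁, m₂, the contour integral of f(z)/z over the positively oriented unit circle, where f(z) = (z − m₁)(z − m₂)(m₁·z + 1)(m₂·z + 1)/z², equals 2πi·((1 − m₁²)(1 − m₂²) − 2·m₁·m₂). -/
/-!
`f z / z = P z / z³` for the quartic `P = (X - m₁)(X - m₂)(m₁X + 1)(m₂X + 1)`. Expanded into
monomials this is a Laurent polynomial, and on a circle around `0` every power `zⁿ` with `n ≠ -1`
integrates to `0` while `z⁻¹` gives `2πi`; so the integral is `2πi` times the coefficient of `X²`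
in `P`.
-/

open Complex Polynomial Real Metric

theorem circleIntegral_sub_zpow (c : ℂ) {R : ℝ} (hR : 0 < R) (n : ℤ) :
    (∮ z in C(c, R), (z - c) ^ n) = if n = -1 then 2 * π * I else 0 := by
  split_ifs with hn
  · subst hn
    simpa using circleIntegral.integral_sub_inv_of_mem_ball (mem_ball_self hR)
  · exact circleIntegral.integral_sub_zpow_of_ne hn c c R

theorem circleIntegral_eval_div_sub_pow (P : ℂ[X]) (c : ℂ) {R : ℝ} (hR : 0 < R) (k : ℕ) :
    (∮ z in C(c, R), P.eval (z - c) / (z - c) ^ (k + 1)) = 2 * π * I * P.coeff k := by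
  have hlaurent : Set.EqOn (fun z => P.eval (z - c) / (z - c) ^ (k + 1))
      (fun z => ∑ n ∈ P.support, P.coeff n * (z - c) ^ ((n : ℤ) - (k + 1))) (sphere c R) := by
    intro z hz
    have hz : z - c ≠ 0 := sub_ne_zero.2 (ne_of_mem_sphere hz hR.ne')
    simp only [eval_eq_sum, Polynomial.sum_def, Finset.sum_div, zpow_sub₀ hz, zpow_natCast]
    norm_cast
    simp [mul_div_assoc]
  have hint (n : ℕ) : CircleIntegrable (fun z => P.coeff n * (z - c) ^ ((n : ℤ) - (k + 1))) c R :=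
    (circleIntegrable_sub_zpow_iff.2 (by simp [hR.ne, abs_of_pos hR])).const_smul
  rw [circleIntegral.integral_congr hR.le hlaurent, circleIntegral.integral_fun_sum fun n _ => hint n]
  have hres (n : ℕ) : ((n : ℤ) - (k + 1) = -1) ↔ n = k := by omega
  simp only [circleIntegral.integral_const_mul, circleIntegral_sub_zpow c hR, hres, mul_ite,
    mul_zero, Finset.sum_ite_eq', mem_support_iff]
  split_ifs with hk
  · ring
  · simp [not_not.1 hk]

theorem coeff_two_quartic {R : Type*} [CommRing R] (a b : R) :
    ((X - C a) * (X - C b) * (C a * X + 1) * (C b * X + 1)).coeff 2 =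
      (1 - a ^ 2) * (1 - b ^ 2) - 2 * a * b := by
  have hexpand : (X - C a) * (X - C b) * (C a * X + 1) * (C b * X + 1) =
      C (a * b) * X ^ 4 + C ((a + b) * (1 - a * b)) * X ^ 3
        + C ((1 - a ^ 2) * (1 - b ^ 2) - 2 * a * b) * X ^ 2
        + C ((a + b) * (a * b - 1)) * X + C (a * b) := by
    simp only [map_mul, map_add, map_sub, map_one, map_pow, map_ofNat]
    ring
  rw [hexpand]
  simp only [coeff_add, coeff_C_mul, coeff_X_pow, coeff_X, coeff_C]
  norm_num

/-- For all real `m₁, m₂`, the contour integral of `f(z)/z` over the positively oriented unit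
circle, where `f(z) = (z − m₁)(z − m₂)(m₁z + 1)(m₂z + 1)/z²`, equals
`2πi((1 − m₁²)(1 − m₂²) − 2m₁m₂)`. -/
theorem stmt_4 (m₁ m₂ : ℝ)
    (f : ℂ → ℂ)
    (hf : ∀ z : ℂ, f z =
      (z - (m₁ : ℂ)) * (z - (m₂ : ℂ)) * ((m₁ : ℂ) * z + 1) * ((m₂ : ℂ) * z + 1) / z ^ 2) :
    (∮ z in C(0, 1), f z / z) =
      2 * Real.pi * Complex.I *
        ((1 - (m₁ : ℂ) ^ 2) * (1 - (m₂ : ℂ) ^ 2) - 2 * (m₁ : ℂ) * (m₂ : ℂ)) := by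
  set P : ℂ[X] := (X - C (m₁ : ℂ)) * (X - C (m₂ : ℂ)) * (C (m₁ : ℂ) * X + 1) * (C (m₂ : ℂ) * X + 1)
  have hintegrand : (fun z => f z / z) = fun z => P.eval (z - 0) / (z - 0) ^ (2 + 1) := by
    funext z
    simp [P, hf, div_div, pow_succ]
  rw [hintegrand, circleIntegral_eval_div_sub_pow P 0 one_pos, coeff_two_quartic]
end

section
/- Let m₁ = 2 and m₂ = (2 + √13)/3, and let f(z) = (z − m₁)(z − m₂)(m₁·z + 1)(m₂·z + 1)/z² for z ∈ ℂ \ {0}. Then the contour integral of f(z)/z over the positively oriented unit circle equals 0. -/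
/-!
Writing `f(z) = P(z) / z²` with `P(z) = (z - m₁)(z - m₂)(m₁z + 1)(m₂z + 1)`, the integrand `P(z) / z³`
is a Laurent polynomial on the circle, and only its `z⁻¹` term survives integration. Hence the
integral is `2πi` times the coefficient of `z²` in `P`, namely `(1 - m₁²)(1 - m₂²) - 2m₁m₂`, which
for `m₁ = 2` equals `3m₂² - 4m₂ - 3`; this vanishes because `m₂` is a root of `3x² - 4x - 3`.
-/

open Complex Polynomial Metric Real

theorem circleIntegral_sub_center_zpow (c : ℂ) {R : ℝ} (hR : R ≠ 0) (n : ℤ) :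
    (∮ z in C(c, R), (z - c) ^ n) = if n = -1 then 2 * π * I else 0 := by
  split_ifs with hn
  · simp [hn, circleIntegral.integral_sub_center_inv c hR]
  · exact circleIntegral.integral_sub_zpow_of_ne hn c c R

theorem Polynomial.circleIntegral_eval_sub_div_pow (p : ℂ[X]) (c : ℂ) {R : ℝ} (hR : 0 < R)
    (k : ℕ) : (∮ z in C(c, R), p.eval (z - c) / (z - c) ^ (k + 1)) = 2 * π * I * p.coeff k := by
  have hne : ∀ z ∈ sphere c R, z - c ≠ 0 := fun z hz => sub_ne_zero.2 (ne_of_mem_sphere hz hR.ne')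
  have hlaurent : Set.EqOn (fun z => p.eval (z - c) / (z - c) ^ (k + 1))
      (fun z => ∑ i ∈ p.support, p.coeff i * (z - c) ^ ((i : ℤ) - (k + 1))) (sphere c R) := by
    intro z hz
    simp only [eval_eq_sum, Polynomial.sum_def, Finset.sum_div, zpow_sub₀ (hne z hz), mul_div_assoc]
    norm_cast
  have hint : ∀ i ∈ p.support,
      CircleIntegrable (fun z => p.coeff i * (z - c) ^ ((i : ℤ) - (k + 1))) c R := fun i _ =>
    (continuousOn_const.mul <| (continuousOn_id.sub continuousOn_const).zpow₀ _ fun z hz =>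
      Or.inl (hne z hz)).circleIntegrable hR.le
  have hres : ∀ i : ℕ, (i : ℤ) - (k + 1) = -1 ↔ i = k := fun i => by omega
  rw [circleIntegral.integral_congr hR.le hlaurent, circleIntegral.integral_fun_sum hint]
  simp only [circleIntegral.integral_const_mul, circleIntegral_sub_center_zpow c hR.ne', hres,
    mul_ite, mul_zero, Finset.sum_ite_eq', mem_support_iff]
  split_ifs with hk
  · ring
  · simp_all

section numeratorPoly

variable {R : Type*} [CommRing R]

noncomputable def numeratorPoly (a b : R) : R[X] :=
  (X - C a) * (X - C b) * (C a * X + 1) * (C b * X + 1)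

theorem numeratorPoly_eq (a b : R) :
    numeratorPoly a b = C (a * b) * X ^ 4 + C (a * (1 - b ^ 2) + b * (1 - a ^ 2)) * X ^ 3
      + C ((1 - a ^ 2) * (1 - b ^ 2) - 2 * a * b) * X ^ 2
      - C (a * (1 - b ^ 2) + b * (1 - a ^ 2)) * X + C (a * b) := by
  simp only [numeratorPoly, map_mul, map_add, map_sub, map_pow, map_one, map_ofNat]
  ring

theorem coeff_two_numeratorPoly (a b : R) :
    (numeratorPoly a b).coeff 2 = (1 - a ^ 2) * (1 - b ^ 2) - 2 * a * b := by
  simp only [numeratorPoly_eq, coeff_add, coeff_sub, coeff_C_mul, coeff_X_pow, coeff_X, coeff_C]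
  norm_num

end numeratorPoly

theorem three_mul_sq_eq_of_eq_two_add_sqrt_thirteen_div_three {m : ℝ} (hm : m = (2 + √13) / 3) :
    3 * m ^ 2 = 4 * m + 3 := by
  have h13 : √13 ^ 2 = 13 := Real.sq_sqrt (by norm_num)
  rw [hm]
  linear_combination h13 / 3

/-- For `m₁ = 2` and `m₂ = (2 + √13)/3`, the contour integral of `f(z)/z` over the positively
oriented unit circle vanishes, where `f(z) = (z − m₁)(z − m₂)(m₁z + 1)(m₂z + 1)/z²`. -/
theorem stmt_6 (m₁ m₂ : ℝ) (hm₁ : m₁ = 2) (hm₂ : m₂ = (2 + Real.sqrt 13) / 3)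
    (f : ℂ → ℂ)
    (hf : ∀ z : ℂ, f z =
      (z - (m₁ : ℂ)) * (z - (m₂ : ℂ)) * ((m₁ : ℂ) * z + 1) * ((m₂ : ℂ) * z + 1) / z ^ 2) :
    (∮ z in C(0, 1), f z / z) = 0 := by
  have hquot : ∀ z, f z / z = (numeratorPoly (m₁ : ℂ) m₂).eval (z - 0) / (z - 0) ^ (2 + 1) := by
    intro z
    simp [hf, numeratorPoly, div_div, pow_succ]
  have hroot : 3 * (m₂ : ℂ) ^ 2 = 4 * m₂ + 3 := by
    exact_mod_cast three_mul_sq_eq_of_eq_two_add_sqrt_thirteen_div_three hm₂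
  calc (∮ z in C(0, 1), f z / z)
      = 2 * π * I * (numeratorPoly (m₁ : ℂ) m₂).coeff 2 := by
        simp only [hquot, circleIntegral_eval_sub_div_pow _ 0 one_pos]
    _ = 0 := by
        rw [coeff_two_numeratorPoly, hm₁]
        push_cast
        linear_combination 2 * π * I * hroot
end
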